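/- arXiv:0906.5236 — 4 statements merged into one kernel-verified Lean document; each statement's English description precedes it below -/
import Mathlib

section
/- Let A be the free associative ℚ-algebra on generators x₁, x₂, …, graded by deg xₙ = n, and let Â be its completion with respect to the grading. There exists a unique sequence (ζₙ)ₙ≥1 of homogeneous elements of Â with deg ζₙ = n such that 1 + Σₙ≥1 xₙ equals the ordered product ⋯ · exp(ζ₃) · exp(ζ₂) · exp(ζ₁) in Â (product taken over decreasing indices from left to right as indices increase). -/
/-!
Only the factors `exp(ζ_k tᵏ)` with `k ≤ n` affect the coefficient of `tⁿ`, and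
`exp(ζ_n tⁿ) ≡ 1 + ζ_n tⁿ` modulo `tⁿ⁺¹`. Hence the `tⁿ`-coefficient of the ordered product is
`ζ_n` plus the `tⁿ`-coefficient of `exp(ζ_{n-1} tⁿ⁻¹) ⋯ exp(ζ₁ t)`, which forces the recursion
`ζ_n = xₙ - [tⁿ] (exp(ζ_{n-1} tⁿ⁻¹) ⋯ exp(ζ₁ t))` and gives existence and uniqueness at once.
This works for any target series with constant coefficient `1` over any `ℚ`-algebra.
-/

/- We model the completion `Â` of the free associative ℚ-algebra on generators
`x₁, x₂, …` (with `deg xₙ = n`) as the power-series ring over the free algebra,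
where the formal variable `t` records the degree: the generator `xₙ` is
represented by `(FreeAlgebra.ι ℚ n) · tⁿ`, and a homogeneous element of degree
`n` is represented by `c · tⁿ` with `c` in the free algebra. -/

/-- The formal exponential `exp (c · tᵏ) = ∑ⱼ cʲ tᵏʲ / j!` (for `k ≥ 1`). -/
noncomputable def expPow {R : Type*} [Ring R] [Algebra ℚ R] (k : ℕ) (c : R) :
    PowerSeries R :=
  PowerSeries.mk fun m =>
    if k ∣ m then (algebraMap ℚ R (((m / k).factorial : ℚ)⁻¹)) * c ^ (m / k) else 0

/-- The ordered partial product `exp(ζ_N t^N) ⋯ exp(ζ₂ t²) · exp(ζ₁ t)`,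
with indices decreasing from left to right. -/
noncomputable def zassDown {R : Type*} [Ring R] [Algebra ℚ R] (ζ : ℕ → R) (N : ℕ) :
    PowerSeries R :=
  (((List.range N).reverse).map (fun k => expPow (k + 1) (ζ (k + 1)))).prod

/-- The series `1 + ∑_{n ≥ 1} xₙ tⁿ` over the free algebra on the `xₙ`. -/
noncomputable def genSeries : PowerSeries (FreeAlgebra ℚ ℕ) :=
  PowerSeries.mk fun n => if n = 0 then 1 else FreeAlgebra.ι ℚ n

open PowerSeries Finset

section
variable {R : Type*} [Ring R] [Algebra ℚ R]

lemma coeff_expPow_zero (k : ℕ) (c : R) : coeff 0 (expPow k c) = 1 := by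
  simp [expPow]

lemma coeff_expPow_self {k : ℕ} (hk : k ≠ 0) (c : R) : coeff k (expPow k c) = c := by
  simp [expPow, Nat.div_self (Nat.pos_of_ne_zero hk)]

lemma coeff_expPow_of_pos_of_lt {i k : ℕ} (hi : 0 < i) (hik : i < k) (c : R) :
    coeff i (expPow k c) = 0 := by
  simp [expPow, Nat.not_dvd_of_pos_of_lt hi hik]

lemma coeff_expPow_mul_of_lt {n k : ℕ} (hn : n < k) (c : R) (φ : PowerSeries R) :
    coeff n (expPow k c * φ) = coeff n φ := by
  rw [coeff_mul, Nat.sum_antidiagonal_eq_sum_range_succ_mk, sum_range_succ',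
    sum_eq_zero fun i hi => by
      rw [coeff_expPow_of_pos_of_lt i.succ_pos (by rw [mem_range] at hi; omega), zero_mul]]
  simp [coeff_expPow_zero]

lemma coeff_expPow_mul_self {k : ℕ} (hk : k ≠ 0) (c : R) (φ : PowerSeries R) :
    coeff k (expPow k c * φ) = coeff k φ + c * constantCoeff φ := by
  obtain ⟨j, rfl⟩ := Nat.exists_eq_succ_of_ne_zero hk
  rw [coeff_mul, Nat.sum_antidiagonal_eq_sum_range_succ_mk, sum_range_succ, sum_range_succ',
    sum_eq_zero fun i hi => by
      rw [coeff_expPow_of_pos_of_lt i.succ_pos (by rw [mem_range] at hi; omega), zero_mul]]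
  simp [coeff_expPow_zero, coeff_expPow_self hk]

lemma zassDown_zero (ζ : ℕ → R) : zassDown ζ 0 = 1 := rfl

lemma zassDown_succ (ζ : ℕ → R) (N : ℕ) :
    zassDown ζ (N + 1) = expPow (N + 1) (ζ (N + 1)) * zassDown ζ N := by
  simp [zassDown, List.range_succ]

lemma constantCoeff_zassDown (ζ : ℕ → R) (N : ℕ) : constantCoeff (zassDown ζ N) = 1 := by
  induction N with
  | zero => simp [zassDown_zero]
  | succ N ih => rw [zassDown_succ, map_mul, ih, mul_one, ← coeff_zero_eq_constantCoeff_apply,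
      coeff_expPow_zero]

lemma zassDown_congr {ζ ζ' : ℕ → R} {N : ℕ} (h : ∀ k, 0 < k → k ≤ N → ζ k = ζ' k) :
    zassDown ζ N = zassDown ζ' N := by
  refine congrArg List.prod (List.map_congr_left fun k hk => ?_)
  rw [List.mem_reverse, List.mem_range] at hk
  rw [h (k + 1) k.succ_pos hk]

lemma coeff_zassDown_of_le (ζ : ℕ → R) {n N : ℕ} (h : n ≤ N) :
    coeff n (zassDown ζ N) = coeff n (zassDown ζ n) := by
  induction N, h using Nat.le_induction with
  | base => rfl
  | succ N hnN ih => rw [zassDown_succ, coeff_expPow_mul_of_lt (by omega), ih]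

lemma coeff_succ_zassDown_succ (ζ : ℕ → R) (m : ℕ) :
    coeff (m + 1) (zassDown ζ (m + 1)) = coeff (m + 1) (zassDown ζ m) + ζ (m + 1) := by
  rw [zassDown_succ, coeff_expPow_mul_self m.succ_ne_zero, constantCoeff_zassDown, mul_one]

noncomputable def zassenhausSeq (f : PowerSeries R) : ℕ → R
  | 0 => 0
  | m + 1 => coeff (m + 1) f -
      coeff (m + 1) (zassDown (fun k => if k < m + 1 then zassenhausSeq f k else 0) m)

lemma zassenhausSeq_zero (f : PowerSeries R) : zassenhausSeq f 0 = 0 := by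
  rw [zassenhausSeq]

lemma zassenhausSeq_succ (f : PowerSeries R) (m : ℕ) :
    zassenhausSeq f (m + 1) = coeff (m + 1) f - coeff (m + 1) (zassDown (zassenhausSeq f) m) := by
  rw [zassenhausSeq, zassDown_congr fun k _ hkm => if_pos (Nat.lt_succ_of_le hkm)]

lemma coeff_zassDown_zassenhausSeq {f : PowerSeries R} (hf : constantCoeff f = 1) (n : ℕ) :
    coeff n (zassDown (zassenhausSeq f) n) = coeff n f := by
  cases n with
  | zero => rw [coeff_zero_eq_constantCoeff_apply, coeff_zero_eq_constantCoeff_apply,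
      constantCoeff_zassDown, hf]
  | succ m => rw [coeff_succ_zassDown_succ, zassenhausSeq_succ, add_sub_cancel]

lemma eq_zassenhausSeq {f : PowerSeries R} {ζ : ℕ → R} (h0 : ζ 0 = 0)
    (hζ : ∀ n, coeff n (zassDown ζ n) = coeff n f) : ζ = zassenhausSeq f := by
  funext n
  induction n using Nat.strong_induction_on with
  | _ n ih =>
    match n with
    | 0 => rw [h0, zassenhausSeq_zero]
    | m + 1 =>
      rw [zassenhausSeq_succ, ← hζ, coeff_succ_zassDown_succ,
        zassDown_congr fun k _ hkm => ih k (Nat.lt_succ_of_le hkm), add_sub_cancel_left]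

end

lemma constantCoeff_genSeries : constantCoeff genSeries = 1 := by
  simp [genSeries]

/-- There is a unique sequence `(ζₙ)_{n ≥ 1}` of homogeneous elements of degree `n`
(encoded as `ζ n · tⁿ`) with `1 + ∑ₙ xₙ = ⋯ exp(ζ₃) exp(ζ₂) exp(ζ₁)`,
the ordered infinite product being understood as the coefficientwise limit of
its partial products (which stabilize degree by degree). -/
theorem stmt_1 :
    ∃! ζ : ℕ → FreeAlgebra ℚ ℕ, ζ 0 = 0 ∧
      ∀ n N : ℕ, n ≤ N →
        PowerSeries.coeff n (zassDown ζ N) = PowerSeries.coeff n genSeries := by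
  refine ⟨zassenhausSeq genSeries, ⟨zassenhausSeq_zero _, fun n N hnN => ?_⟩,
    fun ζ ⟨h0, hζ⟩ => eq_zassenhausSeq h0 fun n => hζ n n le_rfl⟩
  rw [coeff_zassDown_of_le _ hnN, coeff_zassDown_zassenhausSeq constantCoeff_genSeries]
end

section
/- The number of compositions (i₀; i₁, …, i_p) of n (with p ≥ 0) in which the first part i₀ is even and allowed to be 0, and all remaining parts i₁, …, i_p are odd positive integers, equals the Fibonacci number F(n+1), where F(1) = F(2) = 1. -/
/-!
Sort the compositions of `n + 2` by their first odd part `i₁`. Deleting `i₁ = 1` leaves a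
composition of `n + 1`; otherwise subtracting `2` from `i₁` (from `i₀` when `p = 0`, where
`i₀ = n + 2 ≥ 2`) leaves a composition of `n`. Both operations preserve the parity conditions and
are reversible, so the counts satisfy the Fibonacci recursion, with one composition of `0` and one
of `1`.
-/

def evenOddCompositions (n : ℕ) : Set (ℕ × List ℕ) :=
  {p | Even p.1 ∧ (∀ x ∈ p.2, Odd x) ∧ p.1 + p.2.sum = n}

def consOne (p : ℕ × List ℕ) : ℕ × List ℕ := (p.1, 1 :: p.2)

def addTwo : ℕ × List ℕ → ℕ × List ℕ
  | (e, []) => (e + 2, [])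
  | (e, x :: l) => (e, (x + 2) :: l)

theorem consOne_injective : Function.Injective consOne := by
  rintro ⟨e, l⟩ ⟨e', l'⟩ h
  simpa [consOne] using h

theorem addTwo_injective : Function.Injective addTwo := by
  rintro ⟨e, _ | ⟨x, l⟩⟩ ⟨e', _ | ⟨x', l'⟩⟩ h <;> simp_all [addTwo]

theorem disjoint_range_consOne_addTwo :
    Disjoint (Set.range consOne) (Set.range addTwo) := by
  rw [Set.disjoint_left]
  rintro _ ⟨p, rfl⟩ ⟨⟨e, _ | ⟨x, l⟩⟩, h⟩ <;> simp [consOne, addTwo] at h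

theorem mem_evenOddCompositions {n e : ℕ} {l : List ℕ} :
    (e, l) ∈ evenOddCompositions n ↔ e % 2 = 0 ∧ (∀ x ∈ l, x % 2 = 1) ∧ e + l.sum = n := by
  simp [evenOddCompositions, Nat.even_iff, Nat.odd_iff]

theorem evenOddCompositions_zero : evenOddCompositions 0 = {(0, [])} := by
  ext ⟨e, _ | ⟨x, l⟩⟩ <;> simp [mem_evenOddCompositions] <;> omega

theorem evenOddCompositions_one : evenOddCompositions 1 = {(0, [1])} := by
  ext ⟨e, _ | ⟨x, _ | ⟨y, l⟩⟩⟩ <;> simp [mem_evenOddCompositions] <;> omega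

theorem evenOddCompositions_add_two (n : ℕ) :
    evenOddCompositions (n + 2) =
      consOne '' evenOddCompositions (n + 1) ∪ addTwo '' evenOddCompositions n := by
  ext p
  constructor
  · obtain ⟨e, _ | ⟨x, l⟩⟩ := p
    · rw [mem_evenOddCompositions]
      rintro ⟨he, -, hsum⟩
      obtain rfl : e = n + 2 := by simpa using hsum
      exact Or.inr ⟨(n, []), by simp [mem_evenOddCompositions]; omega, rfl⟩
    · rw [mem_evenOddCompositions, List.forall_mem_cons]
      rintro ⟨he, ⟨hx, hl⟩, hsum⟩
      obtain rfl | hx3 : x = 1 ∨ 3 ≤ x := by omega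
      · exact Or.inl ⟨(e, l), by simp_all [mem_evenOddCompositions]; omega, rfl⟩
      · refine Or.inr ⟨(e, (x - 2) :: l), ?_, ?_⟩ <;>
          simp_all [mem_evenOddCompositions, addTwo] <;> omega
  · rintro (⟨⟨e', l'⟩, h, rfl⟩ | ⟨⟨e', _ | ⟨x, l'⟩⟩, h, rfl⟩) <;>
      simp_all [mem_evenOddCompositions, consOne, addTwo] <;> omega

theorem evenOddCompositions_finite : ∀ n, (evenOddCompositions n).Finite
  | 0 => evenOddCompositions_zero ▸ Set.finite_singleton _
  | 1 => evenOddCompositions_one ▸ Set.finite_singleton _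
  | n + 2 => evenOddCompositions_add_two n ▸
      ((evenOddCompositions_finite (n + 1)).image _).union ((evenOddCompositions_finite n).image _)

theorem ncard_evenOddCompositions : ∀ n, (evenOddCompositions n).ncard = Nat.fib (n + 1)
  | 0 => by simp [evenOddCompositions_zero]
  | 1 => by simp [evenOddCompositions_one]
  | n + 2 => by
    rw [evenOddCompositions_add_two, Set.ncard_union_eq
        (disjoint_range_consOne_addTwo.mono (Set.image_subset_range _ _)
          (Set.image_subset_range _ _))
        ((evenOddCompositions_finite _).image _) ((evenOddCompositions_finite _).image _),
      Set.ncard_image_of_injective _ consOne_injective,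
      Set.ncard_image_of_injective _ addTwo_injective, ncard_evenOddCompositions,
      ncard_evenOddCompositions,
      Nat.fib_add_two (n := n + 1), add_comm]

/-- The number of compositions `(i₀; i₁, …, i_p)` of `n` whose first part `i₀`
is even (possibly `0`) and whose remaining parts are odd positive integers
equals the Fibonacci number `F(n+1)` (with `F(1) = F(2) = 1`). -/
theorem stmt_8 (n : ℕ) :
    {p : ℕ × List ℕ | Even p.1 ∧ (∀ x ∈ p.2, Odd x) ∧ p.1 + p.2.sum = n}.ncard =
      Nat.fib (n + 1) :=
  ncard_evenOddCompositions n
end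

section
/- Fix r ≥ 2. The generating function for the number of partitions of n having at most one part divisible by r is: Σ_{n≥0} |Pₙ^{(r)}| xⁿ = (1/(1−x^r)) · ∏_{i≥1, r∤i} 1/(1−x^i), as formal power series in ℚ[[x]]. -/
open PowerSeries

/-- The number of partitions of `n` having at most one part divisible by `r`. -/
noncomputable def numPeakPartitions (r n : ℕ) : ℕ :=
  Nat.card {p : Nat.Partition n // Multiset.card (p.parts.filter (fun i => r ∣ i)) ≤ 1}

/-!
Removing the part divisible by `r`, when there is one, shows that the number of partitions of `n`
with at most one such part is `∑_{a ≤ n, r ∣ a} #{partitions of n - a with no part divisible by r}`,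
the `n`-th coefficient of the Cauchy product `(1 - X^r)⁻¹ * ∏_{r ∤ i} (1 - X^i)⁻¹`. The
coefficients of the second factor come from the infinite product formula for partitions with
restricted parts (`Nat.Partition.hasProd_powerSeriesMk_card_restricted`): the factors with `i > n`
are `≡ 1 mod X^(n+1)`, so the partial product over `i ≤ N` already has the right coefficient in
every degree `n ≤ N`.
-/

open Finset
open scoped PowerSeries.WithPiTopology

namespace Multiset

theorem eq_zero_or_exists_eq_singleton_of_card_le_one {α : Type*} {s : Multiset α}
    (h : card s ≤ 1) : s = 0 ∨ ∃ a, s = {a} := by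
  obtain hs | hs : card s = 0 ∨ card s = 1 := by omega
  exacts [Or.inl (card_eq_zero.mp hs), Or.inr (card_eq_one.mp hs)]

theorem card_le_one_and_sum_eq_iff {s : Multiset ℕ} {a : ℕ} (ha : a ≠ 0) :
    card s ≤ 1 ∧ s.sum = a ↔ s = {a} := by
  refine ⟨fun ⟨hcard, hsum⟩ => ?_, by rintro rfl; simp⟩
  obtain rfl | ⟨b, rfl⟩ := eq_zero_or_exists_eq_singleton_of_card_le_one hcard
  · exact absurd hsum.symm (by simpa using ha)
  · rw [← hsum, sum_singleton]

end Multiset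

namespace Nat.Partition

variable (q : ℕ → Prop) [DecidablePred q]

theorem filter_parts_eq_singleton_iff {n a : ℕ} (hqa : q a) (p : n.Partition) :
    p.parts.filter q = {a} ↔ a ∈ p.parts ∧ ∀ i ∈ p.parts.erase a, ¬ q i := by
  constructor
  · intro h
    have ha : a ∈ p.parts := Multiset.mem_of_mem_filter (h ▸ Multiset.mem_singleton_self a)
    refine ⟨ha, Multiset.filter_eq_nil.mp ?_⟩
    rw [← Multiset.cons_erase ha, Multiset.filter_cons_of_pos _ hqa] at h
    exact (Multiset.cons_inj_right a).mp h
  · rintro ⟨ha, h⟩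
    rw [← Multiset.cons_erase ha, Multiset.filter_cons_of_pos _ hqa, Multiset.filter_eq_nil.mpr h]
    rfl

theorem card_filter_parts_eq_singleton {n a : ℕ} (ha1 : 1 ≤ a) (ha : a ≤ n) (hqa : q a) :
    #{p : n.Partition | p.parts.filter q = {a}} = #(restricted (n - a) (¬ q ·)) := by
  simp only [restricted, ← Fintype.card_subtype]
  refine Fintype.card_congr ?_
  calc {p : n.Partition // p.parts.filter q = {a}}
      ≃ {p : {p : n.Partition // a ∈ p.parts} // ∀ i ∈ p.1.parts.erase a, ¬ q i} :=
        ((Equiv.subtypeSubtypeEquivSubtypeInter _ _).trans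
          (Equiv.subtypeEquivRight fun p => (filter_parts_eq_singleton_iff q hqa p).symm)).symm
    _ ≃ {p : (n - a).Partition // ∀ i ∈ p.parts, ¬ q i} :=
        (partitionWithPartEquiv ha1 ha).subtypeEquiv fun p => by simp

theorem card_filter_sum_filter_parts_eq_zero (n : ℕ) :
    #{p : n.Partition | Multiset.card (p.parts.filter q) ≤ 1 ∧ (p.parts.filter q).sum = 0} =
      #(restricted n (¬ q ·)) := by
  congr 1
  ext p
  simp only [restricted, mem_filter, mem_univ, true_and, Multiset.sum_eq_zero_iff,
    Multiset.mem_filter]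
  constructor
  · rintro ⟨-, h⟩ i hi hqi
    exact (p.parts_pos hi).ne' (h i ⟨hi, hqi⟩)
  · intro h
    refine ⟨?_, fun i hi => absurd hi.2 (h i hi.1)⟩
    simp [Multiset.filter_eq_nil.mpr h]

theorem card_filter_card_filter_parts_le_one (hq0 : q 0) (n : ℕ) :
    #{p : n.Partition | Multiset.card (p.parts.filter q) ≤ 1} =
      ∑ a ∈ (range (n + 1)).filter q, #(restricted (n - a) (¬ q ·)) := by
  rw [card_eq_sum_card_fiberwise (f := fun p => (p.parts.filter q).sum)]
  · refine sum_congr rfl fun a ha => ?_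
    rw [mem_filter, mem_range] at ha
    rw [filter_filter]
    rcases eq_or_ne a 0 with rfl | ha0
    · exact card_filter_sum_filter_parts_eq_zero q n
    · simp_rw [Multiset.card_le_one_and_sum_eq_iff ha0]
      exact card_filter_parts_eq_singleton q (Nat.one_le_iff_ne_zero.mpr ha0) (by omega) ha.2
  · intro p hp
    simp only [coe_filter, mem_univ, true_and, Set.mem_ofPred_eq, mem_range,
      Nat.lt_succ_iff] at hp ⊢
    obtain h | ⟨x, h⟩ := Multiset.eq_zero_or_exists_eq_singleton_of_card_le_one hp
    · simp [h, hq0]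
    · have hx : x ∈ p.parts.filter q := h ▸ Multiset.mem_singleton_self x
      rw [Multiset.mem_filter] at hx
      simpa [h] using ⟨p.le_of_mem_parts hx.1, hx.2⟩

end Nat.Partition

namespace PowerSeries

variable {R : Type*} [CommRing R]

theorem coeff_mul_eq_of_X_pow_dvd_sub_one {n : ℕ} (f : R⟦X⟧) {g : R⟦X⟧}
    (hg : X ^ (n + 1) ∣ g - 1) : coeff n (f * g) = coeff n f := by
  have : coeff n (f * (g - 1)) = 0 :=
    X_pow_dvd_iff.mp (dvd_mul_of_dvd_right hg f) n n.lt_succ_self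
  rwa [mul_sub, mul_one, map_sub, sub_eq_zero] at this

theorem X_pow_dvd_prod_sub_one {ι : Type*} {n : ℕ} {s : Finset ι} {f : ι → R⟦X⟧}
    (hf : ∀ i ∈ s, X ^ n ∣ f i - 1) : X ^ n ∣ ∏ i ∈ s, f i - 1 := by
  refine Finset.prod_induction f (fun g => X ^ n ∣ g - 1) (fun g h hg hh => ?_) (by simp) hf
  have : g * h - 1 = g * (h - 1) + (g - 1) := by ring
  rw [this]
  exact dvd_add (dvd_mul_of_dvd_right hh g) hg

theorem coeff_eq_coeff_prod_range_of_hasProd [TopologicalSpace R] [T2Space R]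
    {f : ℕ → R⟦X⟧} {a : R⟦X⟧} (hf : HasProd f a) {n M : ℕ}
    (hM : ∀ i, M ≤ i → X ^ (n + 1) ∣ f i - 1) :
    coeff n a = coeff n (∏ i ∈ range M, f i) := by
  have hlim := ((WithPiTopology.continuous_coeff R n).tendsto a).comp hf
  refine tendsto_nhds_unique hlim (tendsto_atTop_of_eventually_const (i₀ := range M) ?_)
  intro s hs
  simp only [Function.comp_apply]
  rw [← Finset.prod_sdiff hs, mul_comm]
  refine coeff_mul_eq_of_X_pow_dvd_sub_one _ (X_pow_dvd_prod_sub_one fun i hi => hM i ?_)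
  simpa using (Finset.mem_sdiff.mp hi).2

section Field

variable {K : Type*} [Field K]

theorem inv_one_sub_X_pow_eq_expand {k : ℕ} (hk : k ≠ 0) :
    (1 - X ^ k : K⟦X⟧)⁻¹ = expand k hk (mk 1) := by
  rw [inv_eq_iff_mul_eq_one (by simp [hk]), ← expand_X k hk, ← map_one (expand k hk),
    ← map_sub, ← map_mul, mk_one_mul_one_sub_eq_one, map_one]

theorem coeff_inv_one_sub_X_pow {k : ℕ} (hk : k ≠ 0) (m : ℕ) :
    coeff m (1 - X ^ k : K⟦X⟧)⁻¹ = if k ∣ m then 1 else 0 := by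
  simp [inv_one_sub_X_pow_eq_expand hk, coeff_expand]

theorem X_pow_dvd_inv_one_sub_X_pow_sub_one (k : ℕ) :
    X ^ k ∣ (1 - X ^ k : K⟦X⟧)⁻¹ - 1 := by
  rcases eq_or_ne k 0 with rfl | hk
  · simp
  refine ⟨(1 - X ^ k)⁻¹, ?_⟩
  have := PowerSeries.inv_mul_cancel (1 - X ^ k : K⟦X⟧) (by simp [hk])
  linear_combination this

theorem tsum_X_pow_mul_eq_inv [TopologicalSpace K] [IsTopologicalRing K] [T2Space K]
    {k : ℕ} (hk : k ≠ 0) : ∑' j, (X : K⟦X⟧) ^ (k * j) = (1 - X ^ k)⁻¹ := by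
  rw [eq_comm, inv_eq_iff_mul_eq_one (by simp [hk])]
  simp_rw [pow_mul]
  exact WithPiTopology.tsum_pow_mul_one_sub_of_constantCoeff_eq_zero (by simp [hk])

theorem coeff_prod_filter_range_inv_one_sub_X_pow (p : ℕ → Prop) [DecidablePred p]
    (hp0 : ¬ p 0) {n N : ℕ} (hn : n ≤ N) :
    coeff n (∏ i ∈ (range (N + 1)).filter p, (1 - X ^ i : K⟦X⟧)⁻¹) =
      #(Nat.Partition.restricted n p) := by
  -- The claim is purely algebraic, so any T2 topology on `K` will do.
  let _ : TopologicalSpace K := ⊥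
  have : DiscreteTopology K := ⟨rfl⟩
  have hprod := Nat.Partition.hasProd_powerSeriesMk_card_restricted K p
  simp_rw [tsum_X_pow_mul_eq_inv (Nat.succ_ne_zero _)] at hprod
  rw [← coeff_mk n fun n => (#(Nat.Partition.restricted n p) : K),
    coeff_eq_coeff_prod_range_of_hasProd hprod (M := N), prod_filter, prod_range_succ',
    if_neg hp0, mul_one]
  intro i hi
  split_ifs
  · exact (pow_dvd_pow X (by omega)).trans (X_pow_dvd_inv_one_sub_X_pow_sub_one _)
  · simp

end Field

end PowerSeries

/-- For `r ≥ 2`, `∑_{n≥0} |Pₙ^{(r)}| xⁿ = (1/(1-x^r)) ∏_{i≥1, r∤i} 1/(1-x^i)`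
in `ℚ[[x]]`; the infinite product is understood coefficientwise: in each degree
`n` it agrees with any partial product over `i ≤ N` with `N ≥ n` (factors with
`i > n` do not affect the coefficient of `xⁿ`). -/
theorem stmt_10 (r : ℕ) (hr : 2 ≤ r) :
    ∀ n N : ℕ, n ≤ N →
      PowerSeries.coeff (R := ℚ) n (PowerSeries.mk fun m => (numPeakPartitions r m : ℚ)) =
        PowerSeries.coeff (R := ℚ) n
          ((1 - (PowerSeries.X : PowerSeries ℚ) ^ r)⁻¹ *
            ∏ i ∈ (Finset.range (N + 1)).filter (fun i => ¬ r ∣ i),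
              (1 - (PowerSeries.X : PowerSeries ℚ) ^ i)⁻¹) := by
  intro n N hnN
  rw [coeff_mk, numPeakPartitions, Nat.card_eq_fintype_card, Fintype.card_subtype,
    Nat.Partition.card_filter_card_filter_parts_le_one (r ∣ ·) (dvd_zero r), coeff_mul,
    Nat.sum_antidiagonal_eq_sum_range_succ_mk]
  simp_rw [coeff_inv_one_sub_X_pow (by omega : r ≠ 0), ite_mul, one_mul, zero_mul]
  rw [← sum_filter, Nat.cast_sum]
  refine sum_congr rfl fun a _ => ?_
  exact (coeff_prod_filter_range_inv_one_sub_X_pow _ (not_not.mpr (dvd_zero r)) (by omega)).symm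
end

section
/- (Solomon) For each composition I of n, let D_I ∈ ℚ[Sₙ] be the sum of all permutations whose descent set equals Des(I) = {i₁, i₁+i₂, …, i₁+⋯+i_{r−1}}. Then the ℚ-span of {D_I : I ⊨ n} is a unital subalgebra of the group algebra ℚ[Sₙ], of dimension 2^{n−1}. -/
/-!
Let `X_J` be the sum of the permutations whose descent set is contained in `J`. Since
`X_J = ∑_{S ⊆ J} D_S`, the `X_J` span the same space as the `D_S`. The coefficient of `w` in
`X_J X_K` is the number of `u` with `Des u ⊆ K` and `Des (w u⁻¹) ⊆ J`, and this number depends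
only on `Des w`: if `Des w = Des w'`, then `u ↦ π⁻¹ u`, where `π` sorts `w' u⁻¹` within the
blocks of `J`, is a bijection between the two sets of such `u`. So `X_J X_K` has coefficients
that are constant on descent classes, which is exactly membership in the span of the `D_S`.
Finally `D_∅ = 1`, and the `D_S` are nonzero with disjoint supports, so they form a basis
indexed by the `2^n` subsets of `{0, …, n-1}`.
-/

/-- The descent set of a permutation of `{0, 1, …, n}` (so of `S_{n+1}`),
as a subset of `{0, …, n-1}` (descent positions). -/
def descentSet {n : ℕ} (σ : Equiv.Perm (Fin (n + 1))) : Finset (Fin n) :=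
  Finset.univ.filter fun i => σ i.succ < σ i.castSucc

/-- `D S` is the sum, in the group algebra `ℚ[S_{n+1}]`, of all permutations
whose descent set is exactly `S`. -/
noncomputable def descentSum (n : ℕ) (S : Finset (Fin n)) :
    MonoidAlgebra ℚ (Equiv.Perm (Fin (n + 1))) :=
  ∑ σ ∈ Finset.univ.filter (fun σ : Equiv.Perm (Fin (n + 1)) => descentSet σ = S),
    MonoidAlgebra.of ℚ (Equiv.Perm (Fin (n + 1))) σ

section GroupAlgebra

open Finset

variable {R G : Type*} [Semiring R] [DecidableEq G]

lemma MonoidAlgebra.coeff_sum_of [MulOneClass G] (A : Finset G) (g : G) :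
    (∑ a ∈ A, of R G a).coeff g = if g ∈ A then 1 else 0 := by
  simp [of_apply, Finsupp.single_apply]

lemma MonoidAlgebra.coeff_sum_of_mul_sum_of [Group G] (A B : Finset G) (g : G) :
    ((∑ a ∈ A, of R G a) * ∑ b ∈ B, of R G b).coeff g = #{b ∈ B | g * b⁻¹ ∈ A} := by
  have hcoeff (b : G) :
      ((∑ a ∈ A, of R G a) * of R G b).coeff g = if g * b⁻¹ ∈ A then 1 else 0 := by
    rw [of_apply, coeff_mul_single_apply, coeff_sum_of, mul_one]
  rw [Finset.mul_sum, coeff_sum, Finsupp.finsetSum_apply]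
  simp only [hcoeff, sum_boole]

end GroupAlgebra

namespace DescentAlgebra

open Finset MonoidAlgebra Submodule

variable {n : ℕ}

lemma notMem_descentSet_iff {σ : Equiv.Perm (Fin (n + 1))} {i : Fin n} :
    i ∉ descentSet σ ↔ σ i.castSucc < σ i.succ := by
  simp only [descentSet, mem_filter, mem_univ, true_and, not_lt]
  exact ⟨fun h ↦ h.lt_of_ne (σ.injective.ne Fin.castSucc_lt_succ.ne), le_of_lt⟩

-- `J` cuts the positions `0, …, n` into blocks, with a cut between `k` and `k + 1` for each
-- `k ∈ J`; `blockIndex J i` numbers the block containing `i`.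
def blockIndex (J : Finset (Fin n)) (i : Fin (n + 1)) : ℕ :=
  #{k ∈ J | k.castSucc < i}

lemma blockIndex_mono (J : Finset (Fin n)) : Monotone (blockIndex J) :=
  fun _ _ hxy ↦ card_le_card fun _ ↦ by simpa using fun hk h ↦ ⟨hk, h.trans_le hxy⟩

lemma blockIndex_succ (J : Finset (Fin n)) (i : Fin n) :
    blockIndex J i.succ = blockIndex J i.castSucc + if i ∈ J then 1 else 0 := by
  have : {k ∈ J | k.castSucc < i.succ} = {k ∈ J | k.castSucc < i.castSucc} ∪ {k ∈ J | k = i} := by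
    ext k
    simp only [mem_filter, mem_union, Fin.castSucc_lt_succ_iff, Fin.castSucc_lt_castSucc_iff]
    grind
  rw [blockIndex, blockIndex, this, card_union_of_disjoint]
  · split_ifs <;> simp [filter_eq', *]
  · exact disjoint_filter.2 fun k _ hk hki ↦ (hki ▸ hk).false

lemma blockIndex_castSucc_lt_succ_iff {J : Finset (Fin n)} {i : Fin n} :
    blockIndex J i.castSucc < blockIndex J i.succ ↔ i ∈ J := by
  rw [blockIndex_succ]; split_ifs <;> simpa

lemma blockIndex_succ_of_notMem {J : Finset (Fin n)} {i : Fin n} (hi : i ∉ J) :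
    blockIndex J i.succ = blockIndex J i.castSucc := by
  simp [blockIndex_succ, hi]

def blockKey {α : Type*} (J : Finset (Fin n)) (f : Fin (n + 1) → α) (i : Fin (n + 1)) : ℕ ×ₗ α :=
  toLex (blockIndex J i, f i)

lemma blockKey_lt_blockKey_iff {α : Type*} [Preorder α] {J : Finset (Fin n)}
    {f : Fin (n + 1) → α} {x y : Fin (n + 1)} :
    blockKey J f x < blockKey J f y ↔
      blockIndex J x < blockIndex J y ∨ blockIndex J x = blockIndex J y ∧ f x < f y :=
  Prod.Lex.toLex_lt_toLex

lemma blockKey_comp {α : Type*} {J : Finset (Fin n)} (f : Fin (n + 1) → α)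
    {θ : Fin (n + 1) → Fin (n + 1)} (hθ : ∀ i, blockIndex J (θ i) = blockIndex J i) :
    blockKey J (f ∘ θ) = blockKey J f ∘ θ := by
  ext i; simp [blockKey, hθ]

lemma blockKey_injective {α : Type*} (J : Finset (Fin n)) {f : Fin (n + 1) → α}
    (hf : Function.Injective f) : Function.Injective (blockKey J f) :=
  fun _ _ h ↦ hf (Prod.ext_iff.1 (toLex.injective h)).2

lemma strictMono_blockKey_iff {α : Type*} [Preorder α] {J : Finset (Fin n)} {f : Fin (n + 1) → α} :
    StrictMono (blockKey J f) ↔ ∀ i ∉ J, f i.castSucc < f i.succ := by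
  simp only [Fin.strictMono_iff_lt_succ, blockKey_lt_blockKey_iff,
    blockIndex_castSucc_lt_succ_iff]
  refine forall_congr' fun i ↦ ?_
  by_cases hi : i ∈ J
  · simp [hi]
  · simp [hi, blockIndex_succ_of_notMem hi]

lemma descentSet_subset_iff {J : Finset (Fin n)} {σ : Equiv.Perm (Fin (n + 1))} :
    descentSet σ ⊆ J ↔ StrictMono (blockKey J σ) := by
  simp only [strictMono_blockKey_iff, ← notMem_descentSet_iff, not_imp_not, subset_iff]

noncomputable def blockSort {α : Type*} [LinearOrder α] (J : Finset (Fin n))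
    (f : Fin (n + 1) → α) : Equiv.Perm (Fin (n + 1)) :=
  Tuple.sort (blockKey J f)

section blockSort

variable {α : Type*} [LinearOrder α] {J : Finset (Fin n)} {f : Fin (n + 1) → α}

lemma blockIndex_blockSort (J : Finset (Fin n)) (f : Fin (n + 1) → α) (i : Fin (n + 1)) :
    blockIndex J (blockSort J f i) = blockIndex J i := by
  have hsorted : Monotone (blockIndex J ∘ blockSort J f) :=
    Prod.Lex.monotone_fst_ofLex.comp (Tuple.monotone_sort (blockKey J f))
  exact congrFun (Tuple.unique_monotone (τ := 1) hsorted (blockIndex_mono J)) i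

lemma blockIndex_blockSort_symm (J : Finset (Fin n)) (f : Fin (n + 1) → α) (i : Fin (n + 1)) :
    blockIndex J ((blockSort J f)⁻¹ i) = blockIndex J i := by
  conv_rhs => rw [← (blockSort J f).apply_symm_apply i]
  exact (blockIndex_blockSort J f _).symm

lemma strictMono_blockKey_comp_blockSort (hf : Function.Injective f) :
    StrictMono (blockKey J (f ∘ blockSort J f)) := by
  rw [blockKey_comp f (blockIndex_blockSort J f)]
  exact (Tuple.monotone_sort _).strictMono_of_injective
    ((blockKey_injective J hf).comp (blockSort J f).injective)

lemma eq_blockSort (hf : Function.Injective f) {θ : Equiv.Perm (Fin (n + 1))}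
    (hθ : ∀ i, blockIndex J (θ i) = blockIndex J i) (hmono : StrictMono (blockKey J (f ∘ θ))) :
    θ = blockSort J f := by
  rw [blockKey_comp f hθ] at hmono
  refine Tuple.eq_sort_iff.2 ⟨hmono.monotone, fun i j hij hkey ↦ ?_⟩
  exact absurd (θ.injective (blockKey_injective J hf hkey)) hij.ne

end blockSort

-- Sorting the reversal within the blocks of `S` makes it increase on each block while it still
-- decreases across every cut.
noncomputable def descentRep (S : Finset (Fin n)) : Equiv.Perm (Fin (n + 1)) :=
  Fin.revPerm * blockSort S Fin.rev

lemma descentSet_descentRep (S : Finset (Fin n)) : descentSet (descentRep S) = S := by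
  refine (descentSet_subset_iff.2 (strictMono_blockKey_comp_blockSort Fin.rev_injective)).antisymm
    fun i hi ↦ ?_
  have hblock := blockIndex_castSucc_lt_succ_iff.2 hi
  rw [← blockIndex_blockSort S Fin.rev, ← blockIndex_blockSort S Fin.rev i.succ] at hblock
  simpa [descentSet, descentRep] using (blockIndex_mono S).reflect_lt hblock

lemma descentSet_eq_empty_iff {σ : Equiv.Perm (Fin (n + 1))} : descentSet σ = ∅ ↔ σ = 1 := by
  refine ⟨fun h ↦ ?_, ?_⟩
  · have hmono : StrictMono σ := Fin.strictMono_iff_lt_succ.2 fun i ↦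
      strictMono_blockKey_iff.1 (descentSet_subset_iff.1 h.subset) i (notMem_empty i)
    exact Equiv.ext fun i ↦ hmono.apply_eq
  · rintro rfl
    rw [descentSet, filter_eq_empty_iff]
    exact fun i _ ↦ Fin.castSucc_lt_succ.not_gt

noncomputable def transfer (J : Finset (Fin n)) (w u : Equiv.Perm (Fin (n + 1))) :
    Equiv.Perm (Fin (n + 1)) :=
  (blockSort J ⇑(w * u⁻¹))⁻¹ * u

section transfer

variable {J K : Finset (Fin n)} {w w' u : Equiv.Perm (Fin (n + 1))}

lemma descentSet_mul_inv_transfer_subset : descentSet (w * (transfer J w u)⁻¹) ⊆ J := by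
  have : w * (transfer J w u)⁻¹ = w * u⁻¹ * blockSort J ⇑(w * u⁻¹) := by
    simp [transfer, mul_assoc]
  rw [this, descentSet_subset_iff]
  exact strictMono_blockKey_comp_blockSort (w * u⁻¹).injective

lemma descentSet_transfer_subset (hw : descentSet w = descentSet w') (hu : descentSet u ⊆ K)
    (hwu : descentSet (w * u⁻¹) ⊆ J) : descentSet (transfer J w' u) ⊆ K := by
  set v := transfer J w' u
  have hv : ∀ z, blockIndex J (v z) = blockIndex J (u z) := fun z ↦
    blockIndex_blockSort_symm J _ (u z)
  have hw'v : ∀ z, (w' * v⁻¹) (v z) = w' z := fun z ↦ by simp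
  rw [descentSet_subset_iff, strictMono_blockKey_iff]
  intro i hi
  have hu_lt : u i.castSucc < u i.succ :=
    strictMono_blockKey_iff.1 (descentSet_subset_iff.1 hu) i hi
  rcases (blockIndex_mono J hu_lt.le).lt_or_eq with hlt | heq
  · exact (blockIndex_mono J).reflect_lt (by rwa [hv, hv])
  -- `u` maps `i` and `i + 1` into one block of `J`, on which `w * u⁻¹` increases, so `w` has no
  -- descent at `i`; hence neither has `w'`.
  have hw_lt : w i.castSucc < w i.succ := by
    simpa [blockKey_lt_blockKey_iff, heq] using (descentSet_subset_iff.1 hwu) hu_lt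
  have hw'_lt : w' i.castSucc < w' i.succ :=
    notMem_descentSet_iff.1 (hw ▸ notMem_descentSet_iff.2 hw_lt)
  have hsorted : StrictMono (blockKey J ⇑(w' * v⁻¹)) :=
    descentSet_subset_iff.1 descentSet_mul_inv_transfer_subset
  refine hsorted.lt_iff_lt.1 ?_
  rw [blockKey_lt_blockKey_iff, hv, hv, hw'v, hw'v]
  exact Or.inr ⟨heq, hw'_lt⟩

lemma transfer_transfer (hwu : descentSet (w * u⁻¹) ⊆ J) :
    transfer J w (transfer J w' u) = u := by
  set π := blockSort J ⇑(w' * u⁻¹)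
  have hresort : blockSort J ⇑(w * (transfer J w' u)⁻¹) = π⁻¹ := by
    refine (eq_blockSort (w * (transfer J w' u)⁻¹).injective
      (blockIndex_blockSort_symm J _) ?_).symm
    have : ⇑(w * (transfer J w' u)⁻¹) ∘ ⇑π⁻¹ = ⇑(w * u⁻¹) := by
      ext; simp [transfer, π]
    rw [this]
    exact descentSet_subset_iff.1 hwu
  rw [transfer, hresort, transfer, inv_inv, mul_inv_cancel_left]

lemma card_descentSet_subset_mul_inv_eq (hw : descentSet w = descentSet w') (J K : Finset (Fin n)) :
    #{u | descentSet u ⊆ K ∧ descentSet (w * u⁻¹) ⊆ J} =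
      #{u | descentSet u ⊆ K ∧ descentSet (w' * u⁻¹) ⊆ J} := by
  refine card_nbij' (transfer J w') (transfer J w) ?_ ?_ ?_ ?_ <;> intro u hu <;>
    simp only [coe_filter, mem_univ, true_and] at hu ⊢
  · exact ⟨descentSet_transfer_subset hw hu.1 hu.2, descentSet_mul_inv_transfer_subset⟩
  · exact ⟨descentSet_transfer_subset hw.symm hu.1 hu.2, descentSet_mul_inv_transfer_subset⟩
  · exact transfer_transfer hu.2
  · exact transfer_transfer hu.2

end transfer

noncomputable def descentSubsetSum (n : ℕ) (J : Finset (Fin n)) :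
    MonoidAlgebra ℚ (Equiv.Perm (Fin (n + 1))) :=
  ∑ σ ∈ Finset.univ.filter (fun σ : Equiv.Perm (Fin (n + 1)) => descentSet σ ⊆ J),
    MonoidAlgebra.of ℚ (Equiv.Perm (Fin (n + 1))) σ

lemma coeff_descentSum (S : Finset (Fin n)) (τ : Equiv.Perm (Fin (n + 1))) :
    (descentSum n S).coeff τ = if descentSet τ = S then 1 else 0 := by
  rw [descentSum, coeff_sum_of]
  simp

lemma coeff_sum_smul_descentSum (c : Finset (Fin n) → ℚ) (τ : Equiv.Perm (Fin (n + 1))) :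
    (∑ S, c S • descentSum n S).coeff τ = c (descentSet τ) := by
  simp [coeff_descentSum]

lemma linearIndependent_descentSum : LinearIndependent ℚ (descentSum n) := by
  refine Fintype.linearIndependent_iff.2 fun c hc S ↦ ?_
  have h := congrArg (fun x ↦ x.coeff (descentRep S)) hc
  simp only [coeff_sum_smul_descentSum, descentSet_descentRep] at h
  simpa using h

lemma mem_span_descentSum_of_coeff_eq {x : MonoidAlgebra ℚ (Equiv.Perm (Fin (n + 1)))}
    (hx : ∀ σ τ, descentSet σ = descentSet τ → x.coeff σ = x.coeff τ) :
    x ∈ span ℚ (Set.range (descentSum n)) := by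
  have : x = ∑ S, x.coeff (descentRep S) • descentSum n S := by
    refine coeff_injective (Finsupp.ext fun τ ↦ ?_)
    rw [coeff_sum_smul_descentSum]
    exact hx _ _ (descentSet_descentRep _).symm
  rw [this]
  exact sum_mem fun S _ ↦ smul_mem _ _ (subset_span ⟨S, rfl⟩)

lemma descentSubsetSum_eq_sum_descentSum (J : Finset (Fin n)) :
    descentSubsetSum n J = ∑ S ∈ J.powerset, descentSum n S := by
  rw [descentSubsetSum, ← sum_fiberwise_of_maps_to (g := descentSet) (t := J.powerset) (by simp)]
  refine sum_congr rfl fun S hS ↦ ?_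
  rw [descentSum, filter_filter]
  congr 1
  ext σ
  simp only [mem_filter, mem_univ, true_and]
  exact ⟨And.right, fun h ↦ ⟨h ▸ Finset.mem_powerset.1 hS, h⟩⟩

lemma descentSum_mem_span_descentSubsetSum (S : Finset (Fin n)) :
    descentSum n S ∈ span ℚ (Set.range (descentSubsetSum n)) := by
  induction S using Finset.strongInduction with
  | H S ih =>
    have : descentSum n S = descentSubsetSum n S - ∑ T ∈ S.powerset.erase S, descentSum n T := by
      rw [descentSubsetSum_eq_sum_descentSum, ← add_sum_erase _ _ (mem_powerset_self S),
        add_sub_cancel_right]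
    rw [this]
    refine sub_mem (subset_span ⟨S, rfl⟩) (sum_mem fun T hT ↦ ih T ?_)
    rw [mem_erase, Finset.mem_powerset] at hT
    exact ssubset_of_subset_of_ne hT.2 hT.1

lemma span_descentSubsetSum :
    span ℚ (Set.range (descentSubsetSum n)) = span ℚ (Set.range (descentSum n)) := by
  refine le_antisymm (span_le.2 ?_) (span_le.2 ?_)
  · rintro _ ⟨J, rfl⟩
    rw [descentSubsetSum_eq_sum_descentSum]
    exact sum_mem fun S _ ↦ subset_span ⟨S, rfl⟩
  · rintro _ ⟨S, rfl⟩
    exact descentSum_mem_span_descentSubsetSum S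

lemma coeff_descentSubsetSum_mul (J K : Finset (Fin n)) (w : Equiv.Perm (Fin (n + 1))) :
    (descentSubsetSum n J * descentSubsetSum n K).coeff w =
      #{u | descentSet u ⊆ K ∧ descentSet (w * u⁻¹) ⊆ J} := by
  rw [descentSubsetSum, descentSubsetSum, coeff_sum_of_mul_sum_of, filter_filter]
  simp

lemma descentSubsetSum_mul_mem_span (J K : Finset (Fin n)) :
    descentSubsetSum n J * descentSubsetSum n K ∈ span ℚ (Set.range (descentSum n)) :=
  mem_span_descentSum_of_coeff_eq fun w w' hw ↦ by
    rw [coeff_descentSubsetSum_mul, coeff_descentSubsetSum_mul,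
      card_descentSet_subset_mul_inv_eq hw]

lemma mul_mem_span_descentSum {x y : MonoidAlgebra ℚ (Equiv.Perm (Fin (n + 1)))}
    (hx : x ∈ span ℚ (Set.range (descentSum n))) (hy : y ∈ span ℚ (Set.range (descentSum n))) :
    x * y ∈ span ℚ (Set.range (descentSum n)) := by
  rw [← span_descentSubsetSum] at hx hy
  have hxy := Submodule.mul_mem_mul hx hy
  rw [span_mul_span] at hxy
  refine span_le.2 ?_ hxy
  rintro _ ⟨_, ⟨J, rfl⟩, _, ⟨K, rfl⟩, rfl⟩
  exact descentSubsetSum_mul_mem_span J K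

lemma descentSum_empty : descentSum n ∅ = 1 := by
  simp [descentSum, descentSet_eq_empty_iff, filter_eq', one_def]

end DescentAlgebra

/-- (Solomon) The span of the descent sums `D_I` is a unital subalgebra of the
group algebra `ℚ[S_{n+1}]`, of dimension `2^n` (i.e. `2^{m-1}` for `S_m`). -/
theorem stmt_15 (n : ℕ) :
    (1 : MonoidAlgebra ℚ (Equiv.Perm (Fin (n + 1)))) ∈
        Submodule.span ℚ (Set.range (descentSum n)) ∧
    (∀ x ∈ Submodule.span ℚ (Set.range (descentSum n)),
      ∀ y ∈ Submodule.span ℚ (Set.range (descentSum n)),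
        x * y ∈ Submodule.span ℚ (Set.range (descentSum n))) ∧
    Module.finrank ℚ ↥(Submodule.span ℚ (Set.range (descentSum n))) = 2 ^ n := by
  refine ⟨DescentAlgebra.descentSum_empty (n := n) ▸ Submodule.subset_span ⟨∅, rfl⟩,
    fun _ hx _ hy ↦ DescentAlgebra.mul_mem_span_descentSum hx hy, ?_⟩
  rw [finrank_span_eq_card DescentAlgebra.linearIndependent_descentSum, Fintype.card_finset,
    Fintype.card_fin]
end
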